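/- Let G ⊆ ℂ² be an open connected set that properly contains Δ = {λ ∈ ℂ² : |λ₁| + |λ₂| < 1}. Then (G,T) is not norm preserving: there is a bounded holomorphic function f on T which admits no holomorphic extension F : G → ℂ with sup_{λ∈G} |F(λ)| = sup_{λ∈T} |f(λ)|. -/

import Mathlib

open Metric

noncomputable section

/-- The open unit disc in `ℂ`. -/
def uD : Set ℂ := Metric.ball (0 : ℂ) 1

/-- The union of the two crossed discs `(𝔻 × {0}) ∪ ({0} × 𝔻)` in `ℂ²`. -/
def TT : Set (ℂ × ℂ) := {p | (p.1 ∈ uD ∧ p.2 = 0) ∨ (p.1 = 0 ∧ p.2 ∈ uD)}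

/-- A function is holomorphic on `T` if near every point of `T` it extends to a
holomorphic function on an open neighbourhood. -/
def HoloOnT (f : ℂ × ℂ → ℂ) : Prop :=
  ∀ p ∈ TT, ∃ U : Set (ℂ × ℂ), IsOpen U ∧ p ∈ U ∧
    ∃ F : ℂ × ℂ → ℂ, DifferentiableOn ℂ F U ∧ ∀ q ∈ U ∩ TT, F q = f q

/-- Boundedness on `T`. -/
def BddOnT (f : ℂ × ℂ → ℂ) : Prop := ∃ C : ℝ, ∀ p ∈ TT, ‖f p‖ ≤ C

/-- The supremum of `‖f‖` over a subset of `ℂ²`. -/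
def supOn (f : ℂ × ℂ → ℂ) (S : Set (ℂ × ℂ)) : ℝ := sSup ((fun p => ‖f p‖) '' S)

/-- The pair `(G, T)` is norm preserving: every bounded holomorphic function on `T`
has a holomorphic extension to `G` with the same supremum norm. -/
def NormPres (G : Set (ℂ × ℂ)) : Prop :=
  ∀ f : ℂ × ℂ → ℂ, HoloOnT f → BddOnT f →
    ∃ F : ℂ × ℂ → ℂ, DifferentiableOn ℂ F G ∧ (∀ p ∈ TT, F p = f p) ∧
      supOn F G = supOn f TT


/-- The domain `Δ = {λ ∈ ℂ² : |λ₁| + |λ₂| < 1}`. -/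
def Delta : Set (ℂ × ℂ) := {p | ‖p.1‖ + ‖p.2‖ < 1}

/-
Connectedness of `G` gives a point `q ∈ G` with `|q₁| + |q₂| = 1`. Choose unimodular `α, β`
with `α q₁ = |q₁|`, `β q₂ = |q₂|` and take `f λ = α λ₁ + β λ₂`, whose sup norm on `T` is `1`.
If `F` were a norm-preserving extension, then `ζ ↦ F (ζ q)` would map the unit disc into the
closed unit disc, fix `0` and have derivative `α q₁ + β q₂ = 1` there, so by Schwarz's lemma
`F (ζ q) = ζ`. By continuity `F q = 1`, and the maximum principle on `G` forces `F ≡ 1`,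
contradicting `F 0 = 0`.
-/

open Set Filter Topology

lemma zero_mem_TT : (0 : ℂ × ℂ) ∈ TT := Or.inl ⟨by simp [uD], rfl⟩

lemma zero_mem_Delta : (0 : ℂ × ℂ) ∈ Delta := by simp [Delta]

lemma isOpen_Delta : IsOpen Delta := isOpen_lt (by fun_prop) continuous_const

lemma smul_mem_Delta {q : ℂ × ℂ} (hq : ‖q.1‖ + ‖q.2‖ ≤ 1) {ζ : ℂ} (hζ : ζ ∈ ball (0 : ℂ) 1) :
    ζ • q ∈ Delta := by
  rw [mem_ball_zero_iff] at hζ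
  show ‖ζ * q.1‖ + ‖ζ * q.2‖ < 1
  calc ‖ζ * q.1‖ + ‖ζ * q.2‖ = ‖ζ‖ * (‖q.1‖ + ‖q.2‖) := by rw [norm_mul, norm_mul, mul_add]
    _ ≤ ‖ζ‖ * 1 := by gcongr
    _ < 1 := by rwa [mul_one]

lemma holoOnT_of_differentiable {f : ℂ × ℂ → ℂ} (hf : Differentiable ℂ f) : HoloOnT f :=
  fun _ _ => ⟨univ, isOpen_univ, trivial, f, hf.differentiableOn, fun _ _ => rfl⟩

/-- Positivity excludes the junk value `sSup = 0` of a set unbounded above. -/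
lemma norm_le_supOn {F : ℂ × ℂ → ℂ} {S : Set (ℂ × ℂ)} (hpos : 0 < supOn F S) {p : ℂ × ℂ}
    (hp : p ∈ S) : ‖F p‖ ≤ supOn F S := by
  have hbdd : BddAbove ((fun p => ‖F p‖) '' S) := by
    by_contra h
    rw [supOn, Real.sSup_of_not_bddAbove h] at hpos
    exact hpos.false
  exact le_csSup hbdd (mem_image_of_mem _ hp)

lemma Complex.exists_norm_eq_one_mul_eq_norm (z : ℂ) : ∃ α : ℂ, ‖α‖ = 1 ∧ α * z = ‖z‖ := by
  refine ⟨Complex.exp (↑(-z.arg) * Complex.I), Complex.norm_exp_ofReal_mul_I _, ?_⟩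
  conv_lhs => arg 2; rw [← Complex.norm_mul_exp_arg_mul_I z]
  rw [mul_left_comm, ← Complex.exp_add, Complex.ofReal_neg, neg_mul, neg_add_cancel,
    Complex.exp_zero, mul_one]

/-- Equality case of the Schwarz lemma. -/
lemma Complex.eqOn_id_of_mapsTo_closedBall {g : ℂ → ℂ} (hd : DifferentiableOn ℂ g (ball 0 1))
    (hmaps : MapsTo g (ball 0 1) (closedBall 0 1)) (h0 : g 0 = 0) (h' : deriv g 0 = 1) :
    EqOn g id (ball 0 1) := by
  have hmaps' : MapsTo g (ball 0 1) (closedBall (g 0) 1) := by rwa [h0]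
  have := Complex.affine_of_mapsTo_ball_of_norm_dslope_eq_div hd hmaps'
    (mem_ball_self one_pos) (by simp [h'])
  intro z hz
  simpa [h0, h'] using this hz

lemma fderiv_apply_eq_of_eventually_apply_smul_eq {E F : Type*} [NormedAddCommGroup E]
    [NormedSpace ℂ E] [NormedAddCommGroup F] [NormedSpace ℂ F] {f : E → F} {v : E} {c : F}
    (hf : DifferentiableAt ℂ f 0) (h : ∀ᶠ z in 𝓝 (0 : ℂ), f (z • v) = z • c) :
    fderiv ℂ f 0 v = c := by
  have hline : HasDerivAt (fun z : ℂ => z • v) v 0 := by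
    simpa using (hasDerivAt_id (0 : ℂ)).smul_const v
  have h₁ : HasDerivAt (fun z : ℂ => f (z • v)) (fderiv ℂ f 0 v) 0 :=
    hf.hasFDerivAt.comp_hasDerivAt_of_eq 0 hline (zero_smul ℂ v).symm
  have h₂ : HasDerivAt (fun z : ℂ => f (z • v)) c 0 :=
    ((hasDerivAt_id (0 : ℂ)).smul_const c).congr_of_eventuallyEq h |>.congr_deriv (one_smul ℂ c)
  exact h₁.unique h₂

lemma exists_mem_norm_add_norm_eq_one {G : Set (ℂ × ℂ)} (hconn : IsPreconnected G)
    (hsub : Delta ⊆ G) (hne : Delta ≠ G) : ∃ q ∈ G, ‖q.1‖ + ‖q.2‖ = 1 := by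
  obtain ⟨p, hpG, hpΔ⟩ := exists_of_ssubset (hsub.ssubset_of_ne hne)
  have hIcc := hconn.intermediate_value (hsub zero_mem_Delta) hpG
    (f := fun q : ℂ × ℂ => ‖q.1‖ + ‖q.2‖) (by fun_prop)
  exact hIcc ⟨by simp, not_lt.mp hpΔ⟩

section Extension

variable {G : Set (ℂ × ℂ)} {F : ℂ × ℂ → ℂ} {α β : ℂ} {q : ℂ × ℂ}

lemma apply_smul_eqOn_ball (hsub : Delta ⊆ G) (hF : DifferentiableOn ℂ F G)
    (hFb : ∀ p ∈ G, ‖F p‖ ≤ 1) (hT : ∀ p ∈ TT, F p = α * p.1 + β * p.2)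
    (hq : ‖q.1‖ + ‖q.2‖ ≤ 1) (hαβ : α * q.1 + β * q.2 = 1) :
    EqOn (fun ζ : ℂ => F (ζ • q)) id (ball 0 1) := by
  have hmaps : MapsTo (fun ζ : ℂ => ζ • q) (ball 0 1) G := fun ζ hζ => hsub (smul_mem_Delta hq hζ)
  have hF0 : DifferentiableAt ℂ F 0 :=
    hF.differentiableAt (mem_of_superset (isOpen_Delta.mem_nhds zero_mem_Delta) hsub)
  have hdisc : ∀ᶠ z in 𝓝 (0 : ℂ), z ∈ uD := isOpen_ball.mem_nhds (mem_ball_self one_pos)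
  have hα : fderiv ℂ F 0 (1, 0) = α := by
    refine fderiv_apply_eq_of_eventually_apply_smul_eq hF0 (hdisc.mono fun z hz => ?_)
    rw [hT _ (Or.inl ⟨by simpa using hz, by simp⟩)]
    simp [mul_comm]
  have hβ : fderiv ℂ F 0 (0, 1) = β := by
    refine fderiv_apply_eq_of_eventually_apply_smul_eq hF0 (hdisc.mono fun z hz => ?_)
    rw [hT _ (Or.inr ⟨by simp, by simpa using hz⟩)]
    simp [mul_comm]
  have hderiv : HasDerivAt (fun ζ : ℂ => F (ζ • q)) (fderiv ℂ F 0 q) 0 :=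
    hF0.hasFDerivAt.comp_hasDerivAt_of_eq 0
      (by simpa using (hasDerivAt_id (0 : ℂ)).smul_const q) (zero_smul ℂ q).symm
  have hq_decomp : q = q.1 • ((1 : ℂ), (0 : ℂ)) + q.2 • ((0 : ℂ), (1 : ℂ)) := by
    ext <;> simp
  refine Complex.eqOn_id_of_mapsTo_closedBall
    (hF.comp (by fun_prop) hmaps)
    (fun ζ hζ => mem_closedBall_zero_iff.mpr (hFb _ (hmaps hζ)))
    (by simpa using hT 0 zero_mem_TT) ?_
  rw [hderiv.deriv, hq_decomp, map_add, map_smul, map_smul, hα, hβ, smul_eq_mul, smul_eq_mul,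
    mul_comm, mul_comm q.2, ← hαβ]

lemma apply_eq_one_of_norm_le_one (hsub : Delta ⊆ G) (hF : DifferentiableOn ℂ F G)
    (hFb : ∀ p ∈ G, ‖F p‖ ≤ 1) (hT : ∀ p ∈ TT, F p = α * p.1 + β * p.2) (hqG : q ∈ G)
    (hq : ‖q.1‖ + ‖q.2‖ ≤ 1) (hαβ : α * q.1 + β * q.2 = 1) : F q = 1 := by
  have hmaps : MapsTo (fun ζ : ℂ => ζ • q) (insert 1 (ball 0 1)) G := by
    rintro ζ (rfl | hζ)
    · simpa using hqG
    · exact hsub (smul_mem_Delta hq hζ)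
  have hclosure : insert 1 (ball (0 : ℂ) 1) ⊆ closure (ball 0 1) := by
    rw [closure_ball _ one_ne_zero]
    exact insert_subset (by simp) ball_subset_closedBall
  have := (apply_smul_eqOn_ball hsub hF hFb hT hq hαβ).of_subset_closure
    (hF.continuousOn.comp (by fun_prop) hmaps) continuousOn_id (subset_insert _ _) hclosure
    (mem_insert 1 _)
  simpa using this

end Extension

lemma norm_linear_le_one_of_mem_TT {α β : ℂ} (hα : ‖α‖ ≤ 1) (hβ : ‖β‖ ≤ 1) {p : ℂ × ℂ}
    (hp : p ∈ TT) : ‖α * p.1 + β * p.2‖ ≤ 1 := by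
  rcases hp with ⟨hp₁, hp₂⟩ | ⟨hp₁, hp₂⟩
  · rw [hp₂, mul_zero, add_zero, norm_mul]
    exact mul_le_one₀ hα (norm_nonneg _) (mem_ball_zero_iff.mp hp₁).le
  · rw [hp₁, mul_zero, zero_add, norm_mul]
    exact mul_le_one₀ hβ (norm_nonneg _) (mem_ball_zero_iff.mp hp₂).le

lemma supOn_linear_TT_mem_Ioc {α β : ℂ} (hα : ‖α‖ = 1) (hβ : ‖β‖ = 1) :
    supOn (fun p : ℂ × ℂ => α * p.1 + β * p.2) TT ∈ Ioc 0 1 := by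
  have hle : ∀ x ∈ (fun p : ℂ × ℂ => ‖α * p.1 + β * p.2‖) '' TT, x ≤ 1 := by
    rintro _ ⟨p, hp, rfl⟩
    exact norm_linear_le_one_of_mem_TT hα.le hβ.le hp
  have hhalf : ((1 / 2 : ℂ), (0 : ℂ)) ∈ TT := Or.inl ⟨by norm_num [uD], rfl⟩
  refine ⟨?_, Real.sSup_le hle zero_le_one⟩
  calc (0 : ℝ) < ‖α * (1 / 2 : ℂ) + β * 0‖ := by simp [hα]
    _ ≤ _ := le_csSup ⟨1, hle⟩ (mem_image_of_mem _ hhalf)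

theorem stmt_4 (G : Set (ℂ × ℂ)) (hG : IsOpen G) (hconn : IsConnected G)
    (hsub : Delta ⊆ G) (hne : Delta ≠ G) :
    ∃ f : ℂ × ℂ → ℂ, HoloOnT f ∧ BddOnT f ∧
      ¬ ∃ F : ℂ × ℂ → ℂ, DifferentiableOn ℂ F G ∧ (∀ p ∈ TT, F p = f p) ∧
        supOn F G = supOn f TT := by
  obtain ⟨q, hqG, hq⟩ := exists_mem_norm_add_norm_eq_one hconn.isPreconnected hsub hne
  obtain ⟨α, hα, hαq⟩ := Complex.exists_norm_eq_one_mul_eq_norm q.1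
  obtain ⟨β, hβ, hβq⟩ := Complex.exists_norm_eq_one_mul_eq_norm q.2
  have hαβ : α * q.1 + β * q.2 = 1 := by rw [hαq, hβq]; exact_mod_cast hq
  refine ⟨fun p => α * p.1 + β * p.2, holoOnT_of_differentiable (by fun_prop),
    ⟨1, fun p hp => norm_linear_le_one_of_mem_TT hα.le hβ.le hp⟩, ?_⟩
  rintro ⟨F, hF, hT, hsup⟩
  obtain ⟨hpos, hle⟩ := hsup ▸ supOn_linear_TT_mem_Ioc hα hβ
  have hFb : ∀ p ∈ G, ‖F p‖ ≤ 1 := fun p hp => (norm_le_supOn hpos hp).trans hle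
  have hFq : F q = 1 := apply_eq_one_of_norm_le_one hsub hF hFb hT hqG hq.le hαβ
  have hmax : IsMaxOn (norm ∘ F) G q := fun p hp => by simpa [hFq] using hFb p hp
  have hconst := Complex.eqOn_of_isPreconnected_of_isMaxOn_norm hconn.isPreconnected hG hF hqG hmax
    (hsub zero_mem_Delta)
  simp [hT 0 zero_mem_TT, hFq] at hconst
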